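/- arXiv:1606.08369 — 2 statements merged into one kernel-verified Lean document; each statement's English description precedes it below -/
import Mathlib

section
/- For real \alpha > 0 and s > 0, the Mellin transform of the p-extended zeta function with respect to p satisfies \int_0^\infty p^{s-1} \zeta_p(\alpha)\, dp = \frac{\Gamma(s)\,\Gamma(\alpha+s)}{\Gamma(\alpha)}\, \zeta(\alpha+s). -/
/-!
Expanding `1 / (eˣ - 1) = ∑ₙ e^{-(n+1)x}` and integrating term by term gives the Bose integral
`∫₀^∞ x^{σ-1} / (eˣ - 1) dx = Γ(σ) ζ(σ)`. All integrands are nonnegative, so by Tonelli we may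
integrate in `p` first; for fixed `x > 0` the Gamma integral `∫₀^∞ p^{s-1} e^{-p/x} dp = xˢ Γ(s)`
leaves `Γ(s)/Γ(α)` times the Bose integral at `α + s`. Working with `ℝ≥0∞`-valued integrals and
series also covers `α + s ≤ 1`, where both sides of the identity are the junk value `0` of a
divergent integral and a divergent series.
-/

open MeasureTheory Real

/-- Riemann zeta function for real argument. -/
noncomputable def rzeta (a : ℝ) : ℝ := ∑' n : ℕ, 1 / ((n : ℝ) + 1) ^ a

/-- The p-extended Riemann zeta function. -/
noncomputable def zetaP (p a : ℝ) : ℝ :=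
  (1 / Real.Gamma a) * ∫ x in Set.Ioi (0 : ℝ),
    x ^ (a - 1) * Real.exp (-p / x) / (Real.exp x - 1)

open Set

theorem hasSum_exp_neg_nat_succ_mul {x : ℝ} (hx : 0 < x) :
    HasSum (fun n : ℕ => exp (-((n + 1) * x))) (1 / (exp x - 1)) := by
  have hr : exp (-x) < 1 := exp_lt_one_iff.2 (neg_lt_zero.2 hx)
  have hterm : (fun n : ℕ => exp (-((n + 1) * x))) = fun n => exp (-x) * exp (-x) ^ n := by
    funext n
    rw [← exp_nat_mul, ← exp_add]
    ring_nf
  have hsum : 1 / (exp x - 1) = exp (-x) * (1 - exp (-x))⁻¹ := by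
    have : 1 < exp x := one_lt_exp_iff.2 hx
    rw [exp_neg]
    field_simp
  rw [hterm, hsum]
  exact (hasSum_geometric_of_lt_one (exp_pos (-x)).le hr).mul_left (exp (-x))

theorem lintegral_rpow_mul_exp_neg_mul_Ioi {a r : ℝ} (ha : 0 < a) (hr : 0 < r) :
    ∫⁻ t in Ioi 0, ENNReal.ofReal (t ^ (a - 1) * exp (-(r * t))) =
      ENNReal.ofReal ((1 / r) ^ a * Gamma a) := by
  rw [← integral_rpow_mul_exp_neg_mul_Ioi ha hr]
  refine (ofReal_integral_eq_lintegral_ofReal ?_ ?_).symm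
  · simpa [rpow_one, IntegrableOn] using
      integrableOn_rpow_mul_exp_neg_mul_rpow (by linarith : (-1 : ℝ) < a - 1) one_pos hr
  · filter_upwards [ae_restrict_mem measurableSet_Ioi] with t ht
    exact mul_nonneg (rpow_nonneg ht.le _) (exp_pos _).le

theorem summable_one_div_nat_succ_rpow {σ : ℝ} (hσ : 1 < σ) :
    Summable fun n : ℕ => 1 / ((n : ℝ) + 1) ^ σ := by
  simpa using (summable_nat_add_iff 1).2 (summable_one_div_nat_rpow.2 hσ)

theorem rzeta_eq_toReal_tsum (σ : ℝ) :
    rzeta σ = (∑' n : ℕ, ENNReal.ofReal (1 / ((n : ℝ) + 1) ^ σ)).toReal := by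
  rw [ENNReal.tsum_toReal_eq fun n => ENNReal.ofReal_ne_top, rzeta]
  exact tsum_congr fun n => (ENNReal.toReal_ofReal (by positivity)).symm

theorem lintegral_rpow_div_exp_sub_one {σ : ℝ} (hσ : 0 < σ) :
    ∫⁻ x in Ioi 0, ENNReal.ofReal (x ^ (σ - 1) / (exp x - 1)) =
      ENNReal.ofReal (Gamma σ) * ∑' n : ℕ, ENNReal.ofReal (1 / ((n : ℝ) + 1) ^ σ) := by
  have hexpand : ∀ x ∈ Ioi (0 : ℝ), ENNReal.ofReal (x ^ (σ - 1) / (exp x - 1)) =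
      ∑' n : ℕ, ENNReal.ofReal (x ^ (σ - 1) * exp (-((n + 1) * x))) := by
    intro x (hx : 0 < x)
    have hsum := (hasSum_exp_neg_nat_succ_mul hx).mul_left (x ^ (σ - 1))
    rw [← ENNReal.ofReal_tsum_of_nonneg (fun n => by positivity) hsum.summable, hsum.tsum_eq,
      mul_one_div]
  have hterm : ∀ n : ℕ, ∫⁻ x in Ioi 0, ENNReal.ofReal (x ^ (σ - 1) * exp (-((n + 1) * x))) =
      ENNReal.ofReal (Gamma σ) * ENNReal.ofReal (1 / ((n : ℝ) + 1) ^ σ) := by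
    intro n
    rw [lintegral_rpow_mul_exp_neg_mul_Ioi hσ (by positivity), mul_comm,
      ENNReal.ofReal_mul (by positivity), div_rpow zero_le_one (by positivity), one_rpow]
  rw [setLIntegral_congr_fun measurableSet_Ioi hexpand,
    lintegral_tsum fun n => (by fun_prop : Measurable _).aemeasurable]
  simp_rw [hterm]
  exact ENNReal.tsum_mul_left

theorem exp_neg_div_le_div {p x : ℝ} (hp : 0 < p) (hx : 0 < x) : exp (-p / x) ≤ x / p := by
  rw [neg_div, exp_neg, ← inv_div p x]
  exact inv_anti₀ (div_pos hp hx) ((le_add_of_nonneg_right zero_le_one).trans (add_one_le_exp _))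

noncomputable def zetaPIntegrand (a p x : ℝ) : ℝ :=
  x ^ (a - 1) * exp (-p / x) / (exp x - 1)

theorem zetaP_eq_integral (p a : ℝ) :
    zetaP p a = 1 / Gamma a * ∫ x in Ioi 0, zetaPIntegrand a p x :=
  rfl

theorem measurable_zetaPIntegrand (a : ℝ) : Measurable (Function.uncurry (zetaPIntegrand a)) := by
  unfold zetaPIntegrand
  fun_prop

theorem zetaPIntegrand_nonneg (a p : ℝ) {x : ℝ} (hx : 0 < x) : 0 ≤ zetaPIntegrand a p x := by
  have : 1 < exp x := one_lt_exp_iff.2 hx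
  unfold zetaPIntegrand
  exact div_nonneg (by positivity) (by linarith)

theorem zetaPIntegrand_le {a p x : ℝ} (hp : 0 < p) (hx : 0 < x) :
    zetaPIntegrand a p x ≤ p⁻¹ * (x ^ a / (exp x - 1)) := by
  have : 1 < exp x := one_lt_exp_iff.2 hx
  calc zetaPIntegrand a p x ≤ x ^ (a - 1) * (x / p) / (exp x - 1) := by
        unfold zetaPIntegrand
        gcongr
        exact exp_neg_div_le_div hp hx
    _ = p⁻¹ * (x ^ a / (exp x - 1)) := by
        rw [show x ^ a = x ^ (a - 1) * x by rw [← rpow_add_one hx.ne', sub_add_cancel]]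
        ring

theorem lintegral_zetaPIntegrand_ne_top {a p : ℝ} (ha : 0 < a) (hp : 0 < p) :
    ∫⁻ x in Ioi 0, ENNReal.ofReal (zetaPIntegrand a p x) ≠ ⊤ := by
  have hbound : ∫⁻ x in Ioi 0, ENNReal.ofReal (zetaPIntegrand a p x) ≤
      ENNReal.ofReal p⁻¹ * ∫⁻ x in Ioi 0, ENNReal.ofReal (x ^ (a + 1 - 1) / (exp x - 1)) := by
    rw [← lintegral_const_mul' _ _ ENNReal.ofReal_ne_top]
    refine setLIntegral_mono' measurableSet_Ioi fun x hx => ?_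
    rw [← ENNReal.ofReal_mul (by positivity), add_sub_cancel_right]
    exact ENNReal.ofReal_le_ofReal (zetaPIntegrand_le hp hx)
  rw [lintegral_rpow_div_exp_sub_one (by linarith), ← ENNReal.ofReal_tsum_of_nonneg
    (fun n => by positivity) (summable_one_div_nat_succ_rpow (by linarith))] at hbound
  exact ne_top_of_le_ne_top (ENNReal.mul_ne_top ENNReal.ofReal_ne_top
    (ENNReal.mul_ne_top ENNReal.ofReal_ne_top ENNReal.ofReal_ne_top)) hbound

theorem ofReal_zetaP {a p : ℝ} (ha : 0 < a) (hp : 0 < p) :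
    ENNReal.ofReal (zetaP p a) =
      ENNReal.ofReal (1 / Gamma a) * ∫⁻ x in Ioi 0, ENNReal.ofReal (zetaPIntegrand a p x) := by
  have hnonneg : 0 ≤ᵐ[volume.restrict (Ioi 0)] zetaPIntegrand a p := by
    filter_upwards [ae_restrict_mem measurableSet_Ioi] with x hx
    exact zetaPIntegrand_nonneg a p hx
  have hmeas : AEStronglyMeasurable (zetaPIntegrand a p) (volume.restrict (Ioi 0)) :=
    ((measurable_zetaPIntegrand a).comp measurable_prodMk_left).aestronglyMeasurable
  rw [zetaP_eq_integral, integral_eq_lintegral_of_nonneg_ae hnonneg hmeas,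
    ENNReal.ofReal_mul (by positivity),
    ENNReal.ofReal_toReal (lintegral_zetaPIntegrand_ne_top ha hp)]

theorem zetaP_nonneg {a : ℝ} (ha : 0 ≤ a) (p : ℝ) : 0 ≤ zetaP p a := by
  rw [zetaP_eq_integral]
  exact mul_nonneg (by positivity)
    (setIntegral_nonneg measurableSet_Ioi fun x hx => zetaPIntegrand_nonneg a p hx)

theorem stronglyMeasurable_zetaP (a : ℝ) : StronglyMeasurable fun p => zetaP p a :=
  ((measurable_zetaPIntegrand a).stronglyMeasurable.integral_prod_right').const_mul _

theorem lintegral_rpow_mul_zetaPIntegrand {a s x : ℝ} (hs : 0 < s) (hx : 0 < x) :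
    ∫⁻ p in Ioi 0, ENNReal.ofReal (p ^ (s - 1) * zetaPIntegrand a p x) =
      ENNReal.ofReal (Gamma s * (x ^ (a + s - 1) / (exp x - 1))) := by
  have hc : 0 ≤ x ^ (a - 1) / (exp x - 1) := by
    have : 1 < exp x := one_lt_exp_iff.2 hx
    exact div_nonneg (by positivity) (by linarith)
  have hfactor : ∀ p ∈ Ioi (0 : ℝ), ENNReal.ofReal (p ^ (s - 1) * zetaPIntegrand a p x) =
      ENNReal.ofReal (x ^ (a - 1) / (exp x - 1)) *
        ENNReal.ofReal (p ^ (s - 1) * exp (-(x⁻¹ * p))) := by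
    intro p _
    rw [← ENNReal.ofReal_mul hc, zetaPIntegrand, neg_div, div_eq_inv_mul p x]
    ring_nf
  rw [setLIntegral_congr_fun measurableSet_Ioi hfactor,
    lintegral_const_mul' _ _ ENNReal.ofReal_ne_top,
    lintegral_rpow_mul_exp_neg_mul_Ioi hs (inv_pos.2 hx), one_div, inv_inv,
    ← ENNReal.ofReal_mul hc, show a + s - 1 = a - 1 + s by ring, rpow_add hx]
  ring_nf

theorem lintegral_rpow_mul_zetaP {a s : ℝ} (ha : 0 < a) (hs : 0 < s) :
    ∫⁻ p in Ioi 0, ENNReal.ofReal (p ^ (s - 1) * zetaP p a) =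
      ENNReal.ofReal (Gamma s * Gamma (a + s) / Gamma a) *
        ∑' n : ℕ, ENNReal.ofReal (1 / ((n : ℝ) + 1) ^ (a + s)) := by
  calc ∫⁻ p in Ioi 0, ENNReal.ofReal (p ^ (s - 1) * zetaP p a)
      = ∫⁻ p in Ioi 0, ENNReal.ofReal (1 / Gamma a) *
          ∫⁻ x in Ioi 0, ENNReal.ofReal (p ^ (s - 1) * zetaPIntegrand a p x) := by
        refine setLIntegral_congr_fun measurableSet_Ioi fun p (hp : 0 < p) => ?_
        simp_rw [ENNReal.ofReal_mul (rpow_nonneg hp.le _), ofReal_zetaP ha hp]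
        rw [lintegral_const_mul' _ _ ENNReal.ofReal_ne_top]
        ring
    _ = ENNReal.ofReal (1 / Gamma a) *
          ∫⁻ x in Ioi 0, ∫⁻ p in Ioi 0, ENNReal.ofReal (p ^ (s - 1) * zetaPIntegrand a p x) := by
        rw [lintegral_const_mul' _ _ ENNReal.ofReal_ne_top,
          lintegral_lintegral_swap (by unfold zetaPIntegrand; fun_prop)]
    _ = ENNReal.ofReal (1 / Gamma a) *
          ∫⁻ x in Ioi 0, ENNReal.ofReal (Gamma s * (x ^ (a + s - 1) / (exp x - 1))) := by
        rw [setLIntegral_congr_fun measurableSet_Ioi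
          fun x (hx : 0 < x) => lintegral_rpow_mul_zetaPIntegrand hs hx]
    _ = ENNReal.ofReal (1 / Gamma a) * (ENNReal.ofReal (Gamma s) * (ENNReal.ofReal
          (Gamma (a + s)) * ∑' n : ℕ, ENNReal.ofReal (1 / ((n : ℝ) + 1) ^ (a + s)))) := by
        simp_rw [ENNReal.ofReal_mul (Gamma_pos_of_pos hs).le]
        rw [lintegral_const_mul' _ _ ENNReal.ofReal_ne_top,
          lintegral_rpow_div_exp_sub_one (by linarith)]
    _ = _ := by
        rw [← mul_assoc, ← mul_assoc, ← ENNReal.ofReal_mul (by positivity),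
          ← ENNReal.ofReal_mul (by positivity)]
        congr 2
        ring

theorem mellin_extended_zeta (α s : ℝ) (hα : 0 < α) (hs : 0 < s) :
    (∫ p in Set.Ioi (0 : ℝ), p ^ (s - 1) * zetaP p α) =
      Real.Gamma s * Real.Gamma (α + s) / Real.Gamma α * rzeta (α + s) := by
  have hnonneg : 0 ≤ᵐ[volume.restrict (Ioi 0)] fun p => p ^ (s - 1) * zetaP p α := by
    filter_upwards [ae_restrict_mem measurableSet_Ioi] with p (hp : 0 < p)
    exact mul_nonneg (rpow_nonneg hp.le _) (zetaP_nonneg hα.le p)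
  have hmeas : AEStronglyMeasurable (fun p => p ^ (s - 1) * zetaP p α) (volume.restrict (Ioi 0)) :=
    ((measurable_id.pow_const _).stronglyMeasurable.mul
      (stronglyMeasurable_zetaP α)).aestronglyMeasurable
  rw [integral_eq_lintegral_of_nonneg_ae hnonneg hmeas, lintegral_rpow_mul_zetaP hα hs,
    ENNReal.toReal_mul, ENNReal.toReal_ofReal (by positivity), ← rzeta_eq_toReal_tsum]
end

section
/- Let \mu > 0, C > 0 and q > -\mu - 1/2 be such that |J_{\mu-1/2}(x)| \le C x^q for all x > 0, and suppose \mu + q + 1/2 > 0. Then for every p \ge 0 and r > 0, the p-extended Mathieu series satisfies |S_{\mu,p}(r)| \le \frac{C\sqrt{\pi}}{(2r)^{\mu-1/2}\Gamma(\mu+1)} \Gamma(\mu+q+3/2)\, \zeta(\mu+q+3/2). -/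
open MeasureTheory Real

/-- Bessel function of the first kind. -/
noncomputable def besselJ (ν x : ℝ) : ℝ :=
  ∑' n : ℕ, ((-1) ^ n / (n.factorial * Real.Gamma (n + ν + 1))) * (x / 2) ^ (2 * n + ν : ℝ)

/-- The p-extended Mathieu series via its integral representation. -/
noncomputable def SmuP (μ p r : ℝ) : ℝ :=
  Real.sqrt π / ((2 * r) ^ (μ - 1 / 2) * Real.Gamma (μ + 1)) *
    ∫ x in Set.Ioi (0 : ℝ),
      x ^ (μ + 1 / 2) * Real.exp (-p / x) / (Real.exp x - 1) * besselJ (μ - 1 / 2) (r * x)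

/-! Since `exp (-p / x) ≤ 1` and `|J| ≤ C x ^ q`, the integrand of `SmuP` is dominated by
`C x ^ (s - 1) / (exp x - 1)` with `s = μ + q + 3 / 2 > 1`. Expanding
`1 / (exp x - 1) = ∑ exp (-(n + 1) x)` and integrating termwise against the Gamma integral gives
`∫₀^∞ x ^ (s - 1) / (exp x - 1) dx = Γ(s) ζ(s)`. -/

open Set

lemma tsum_exp_neg_nat_succ_mul {x : ℝ} (hx : 0 < x) :
    ∑' n : ℕ, exp (-((n + 1) * x)) = 1 / (exp x - 1) := by
  have hgeom (n : ℕ) : exp (-((n + 1) * x)) = exp (-x) * exp (-x) ^ n := by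
    rw [← exp_nat_mul, ← exp_add]; ring_nf
  simp_rw [hgeom]
  rw [tsum_mul_left, tsum_geometric_of_lt_one (exp_nonneg _) (exp_lt_one_iff.mpr (by linarith)),
    exp_neg]
  field_simp [(sub_pos.mpr (one_lt_exp_iff.mpr hx)).ne']

lemma one_div_exp_sub_one_le {x : ℝ} (hx : 0 < x) :
    1 / (exp x - 1) ≤ (x⁻¹ + 1) * exp (-x) := by
  have hpos : 0 < exp x - 1 := sub_pos.mpr (one_lt_exp_iff.mpr hx)
  rw [div_le_iff₀ hpos, exp_neg]
  field_simp
  nlinarith [add_one_le_exp x]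

lemma integrableOn_rpow_div_exp_sub_one {s : ℝ} (hs : 1 < s) :
    IntegrableOn (fun x : ℝ => x ^ (s - 1) / (exp x - 1)) (Ioi 0) := by
  have hmajorant : IntegrableOn (fun x : ℝ => exp (-x) * x ^ (s - 1 - 1) + exp (-x) * x ^ (s - 1))
      (Ioi 0) :=
    (GammaIntegral_convergent (by linarith)).add (GammaIntegral_convergent (by linarith))
  refine hmajorant.mono' (Measurable.aestronglyMeasurable (by fun_prop))
    (ae_restrict_of_forall_mem measurableSet_Ioi fun x (hx : 0 < x) => ?_)
  have hpos : 0 < exp x - 1 := sub_pos.mpr (one_lt_exp_iff.mpr hx)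
  rw [norm_of_nonneg (by positivity), rpow_sub_one hx.ne' (s - 1)]
  calc x ^ (s - 1) / (exp x - 1) = x ^ (s - 1) * (1 / (exp x - 1)) := by ring
    _ ≤ x ^ (s - 1) * ((x⁻¹ + 1) * exp (-x)) := by gcongr; exact one_div_exp_sub_one_le hx
    _ = exp (-x) * (x ^ (s - 1) / x) + exp (-x) * x ^ (s - 1) := by ring

lemma hasSum_rzeta {s : ℝ} (hs : 1 < s) :
    HasSum (fun n : ℕ => 1 / ((n : ℝ) + 1) ^ s) (rzeta s) := by
  have := (summable_nat_add_iff 1).mpr (summable_one_div_nat_rpow.mpr hs)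
  rw [rzeta]
  exact_mod_cast this.hasSum

lemma integral_rpow_div_exp_sub_one {s : ℝ} (hs : 1 < s) :
    ∫ x in Ioi 0, x ^ (s - 1) / (exp x - 1) = Gamma s * rzeta s := by
  set F : ℕ → ℝ → ℝ := fun n x => x ^ (s - 1) * exp (-((n + 1) * x))
  have hF_int (n : ℕ) : IntegrableOn (F n) (Ioi 0) := by
    simpa only [rpow_one, neg_mul] using
      integrableOn_rpow_mul_exp_neg_mul_rpow (s := s - 1) (p := 1) (by linarith) one_pos
        (Nat.cast_add_one_pos n)
  have hF_integral (n : ℕ) : ∫ x in Ioi 0, F n x = Gamma s * (1 / ((n : ℝ) + 1) ^ s) := by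
    rw [integral_rpow_mul_exp_neg_mul_Ioi (by linarith) (Nat.cast_add_one_pos n),
      div_rpow zero_le_one (Nat.cast_add_one_pos n).le, one_rpow, mul_comm]
  have hF_norm (n : ℕ) : ∫ x in Ioi 0, ‖F n x‖ = ∫ x in Ioi 0, F n x :=
    setIntegral_congr_fun measurableSet_Ioi fun x (hx : 0 < x) => norm_of_nonneg (by positivity)
  have hF_sum : ∀ x ∈ Ioi (0 : ℝ), ∑' n, F n x = x ^ (s - 1) / (exp x - 1) := fun x hx => by
    rw [tsum_mul_left, tsum_exp_neg_nat_succ_mul hx, mul_one_div]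
  have hsum := hasSum_integral_of_summable_integral_norm hF_int
    (by simpa only [hF_norm, hF_integral] using ((hasSum_rzeta hs).mul_left (Gamma s)).summable)
  rw [← setIntegral_congr_fun measurableSet_Ioi hF_sum, ← hsum.tsum_eq]
  simp only [hF_integral]
  exact ((hasSum_rzeta hs).mul_left (Gamma s)).tsum_eq

lemma norm_integral_rpow_mul_exp_div_exp_sub_one_mul_le {a q p C : ℝ} {f : ℝ → ℝ} (hp : 0 ≤ p)
    (hf : ∀ x, 0 < x → |f x| ≤ C * x ^ q) (haq : 0 < a + q) :
    ‖∫ x in Ioi 0, x ^ a * exp (-p / x) / (exp x - 1) * f x‖ ≤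
      C * (Gamma (a + q + 1) * rzeta (a + q + 1)) := by
  have hs : 1 < a + q + 1 := by linarith
  have hbound : ∀ x ∈ Ioi (0 : ℝ), ‖x ^ a * exp (-p / x) / (exp x - 1) * f x‖ ≤
      C * (x ^ (a + q + 1 - 1) / (exp x - 1)) := fun x (hx : 0 < x) => by
    have hpos : 0 < exp x - 1 := sub_pos.mpr (one_lt_exp_iff.mpr hx)
    have hexp : exp (-p / x) ≤ 1 :=
      exp_le_one_iff.mpr (div_nonpos_of_nonpos_of_nonneg (by linarith) hx.le)
    calc ‖x ^ a * exp (-p / x) / (exp x - 1) * f x‖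
        = x ^ a * exp (-p / x) / (exp x - 1) * |f x| := by
          rw [norm_mul, norm_of_nonneg (by positivity), norm_eq_abs]
      _ ≤ x ^ a * 1 / (exp x - 1) * (C * x ^ q) := by
          gcongr
          exact hf x hx
      _ = C * (x ^ (a + q + 1 - 1) / (exp x - 1)) := by
          rw [add_sub_cancel_right, rpow_add hx]; ring
  calc ‖∫ x in Ioi 0, x ^ a * exp (-p / x) / (exp x - 1) * f x‖
      ≤ ∫ x in Ioi 0, C * (x ^ (a + q + 1 - 1) / (exp x - 1)) :=
        norm_integral_le_of_norm_le ((integrableOn_rpow_div_exp_sub_one hs).const_mul C)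
          (ae_restrict_of_forall_mem measurableSet_Ioi hbound)
    _ = C * (Gamma (a + q + 1) * rzeta (a + q + 1)) := by
        rw [integral_const_mul, integral_rpow_div_exp_sub_one hs]

theorem p_extended_mathieu_generic_bound_general (μ C q p r : ℝ) (hμ : 0 < μ) (hr : 0 < r)
    (hJ : ∀ x : ℝ, 0 < x → |besselJ (μ - 1 / 2) (r * x)| ≤ C * x ^ q)
    (hqμ : 0 < μ + q + 1 / 2) (hp : 0 ≤ p) :
    |SmuP μ p r| ≤
      C * Real.sqrt π / ((2 * r) ^ (μ - 1 / 2) * Real.Gamma (μ + 1)) *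
        (Real.Gamma (μ + q + 3 / 2) * rzeta (μ + q + 3 / 2)) := by
  have hI :=
    norm_integral_rpow_mul_exp_div_exp_sub_one_mul_le hp hJ (a := μ + 1 / 2) (by linarith)
  rw [show μ + 1 / 2 + q + 1 = μ + q + 3 / 2 by ring, norm_eq_abs] at hI
  rw [SmuP, abs_mul, abs_of_nonneg (by positivity)]
  calc _ ≤ sqrt π / ((2 * r) ^ (μ - 1 / 2) * Gamma (μ + 1)) *
        (C * (Gamma (μ + q + 3 / 2) * rzeta (μ + q + 3 / 2))) := by gcongr
    _ = _ := by ring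

theorem p_extended_mathieu_generic_bound (μ C q p r : ℝ) (hμ : 0 < μ) (hC : 0 < C)
    (hq : -μ - 1 / 2 < q) (hr : 0 < r)
    (hJ : ∀ x : ℝ, 0 < x → |besselJ (μ - 1 / 2) (r * x)| ≤ C * x ^ q)
    (hqμ : 0 < μ + q + 1 / 2) (hp : 0 ≤ p) :
    |SmuP μ p r| ≤
      C * Real.sqrt π / ((2 * r) ^ (μ - 1 / 2) * Real.Gamma (μ + 1)) *
        (Real.Gamma (μ + q + 3 / 2) * rzeta (μ + q + 3 / 2)) :=
  p_extended_mathieu_generic_bound_general μ C q p r hμ hr hJ hqμ hp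
end
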